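/- Let n, d ≥ 1, χ ≥ 1, and let W ∈ ℝ^{n×n} satisfy W·1_n = 0, Wᵀ·1_n = 0, and ‖(W ⊗ I_d)v − v‖² ≤ (1 − 1/χ)‖v‖² for all v ∈ (ℝ^d)^n with Pv = v. Let η, η' > 0, m, g ∈ (ℝ^d)^n, and set m' = (η/η')·(m + g − (W ⊗ I_d)(m + g)). Then ‖η·m‖_P² ≤ 2χ‖η·m‖_P² − 2χ‖η'·m'‖_P² + 4χ²‖η·g‖_P². -/

import Mathlib

open scoped BigOperators RealInnerProductSpace
open Matrix

noncomputable section

/-- The Kronecker product `W ⊗ I_d` as an `nd × nd` matrix. -/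
def kron (n d : ℕ) (W : Matrix (Fin n) (Fin n) ℝ) :
    Matrix (Fin n × Fin d) (Fin n × Fin d) ℝ :=
  Matrix.kroneckerMap (· * ·) W (1 : Matrix (Fin d) (Fin d) ℝ)

/-- `P = (I_n − (1/n)·1_n·1_nᵀ) ⊗ I_d`, the orthogonal projection onto `L⊥`. -/
def projMat (n d : ℕ) : Matrix (Fin n × Fin d) (Fin n × Fin d) ℝ :=
  Matrix.kroneckerMap (· * ·)
    ((1 : Matrix (Fin n) (Fin n) ℝ) - (n : ℝ)⁻¹ • Matrix.of (fun _ _ => (1 : ℝ)))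
    (1 : Matrix (Fin d) (Fin d) ℝ)

/-- Matrix-vector multiplication on the Euclidean space `(ℝ^d)^n ≃ ℝ^{nd}`. -/
def mulVecE {n d : ℕ} (M : Matrix (Fin n × Fin d) (Fin n × Fin d) ℝ)
    (v : EuclideanSpace ℝ (Fin n × Fin d)) : EuclideanSpace ℝ (Fin n × Fin d) :=
  (WithLp.equiv 2 (Fin n × Fin d → ℝ)).symm (M.mulVec ((WithLp.equiv 2 (Fin n × Fin d → ℝ)) v))

/-- `‖v‖_P = ‖Pv‖`. -/
def pnorm {n d : ℕ} (v : EuclideanSpace ℝ (Fin n × Fin d)) : ℝ :=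
  ‖mulVecE (projMat n d) v‖

/-! The identities `P (W ⊗ I_d) = W ⊗ I_d = (W ⊗ I_d) P` and `P² = P` give
`P (η' m') = (I - W ⊗ I_d) y` with `y = P (η m) + P (η g)` fixed by `P`, so the contraction
hypothesis yields `2χ ‖P (η' m')‖² ≤ (2χ - 2) ‖y‖²`. Young's inequality with weight `2χ - 2`
splits `‖y‖²` into a `‖P (η m)‖²` part, absorbed by the left-hand side, and a `‖P (η g)‖²` part
with coefficient `(2χ - 2)(2χ - 1) ≤ 4χ²`. -/

theorem mul_sq_norm_add_le {E : Type*} [SeminormedAddGroup E] {c : ℝ} (hc : 0 ≤ c) (a b : E) :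
    c * ‖a + b‖ ^ 2 ≤ (1 + c) * ‖a‖ ^ 2 + c * (1 + c) * ‖b‖ ^ 2 := by
  calc c * ‖a + b‖ ^ 2 ≤ c * (‖a‖ + ‖b‖) ^ 2 := by gcongr; exact norm_add_le a b
    _ ≤ (1 + c) * ‖a‖ ^ 2 + c * (1 + c) * ‖b‖ ^ 2 := by nlinarith [sq_nonneg (‖a‖ - c * ‖b‖)]

theorem sq_norm_le_of_sq_norm_le_one_sub_inv_mul {E : Type*} [SeminormedAddGroup E] {χ : ℝ}
    (hχ : 1 ≤ χ) {a b z : E} (hz : ‖z‖ ^ 2 ≤ (1 - 1 / χ) * ‖a + b‖ ^ 2) :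
    ‖a‖ ^ 2 ≤ 2 * χ * ‖a‖ ^ 2 - 2 * χ * ‖z‖ ^ 2 + 4 * χ ^ 2 * ‖b‖ ^ 2 := by
  have hz' : 2 * χ * ‖z‖ ^ 2 ≤ (2 * χ - 2) * ‖a + b‖ ^ 2 := by
    have h := mul_le_mul_of_nonneg_left hz (by linarith : (0 : ℝ) ≤ 2 * χ)
    have hχ0 : χ ≠ 0 := by positivity
    calc 2 * χ * ‖z‖ ^ 2 ≤ 2 * χ * ((1 - 1 / χ) * ‖a + b‖ ^ 2) := h
      _ = (2 * χ - 2) * ‖a + b‖ ^ 2 := by field_simp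
  have hyoung := mul_sq_norm_add_le (by linarith : (0 : ℝ) ≤ 2 * χ - 2) a b
  nlinarith [mul_nonneg (by linarith : (0 : ℝ) ≤ 6 * χ - 2) (sq_nonneg ‖b‖)]

section Matrices

variable {n d : ℕ}

def centeringMatrix (n : ℕ) : Matrix (Fin n) (Fin n) ℝ :=
  1 - (n : ℝ)⁻¹ • Matrix.of (fun _ _ => (1 : ℝ))

theorem centeringMatrix_transpose : (centeringMatrix n)ᵀ = centeringMatrix n := by
  ext i j
  simp [centeringMatrix, Matrix.one_apply, eq_comm]

theorem centeringMatrix_mulVec_one (hn : n ≠ 0) : centeringMatrix n *ᵥ (fun _ => 1) = 0 := by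
  ext i
  simp [centeringMatrix, Matrix.mulVec, dotProduct, Matrix.one_apply, hn]

theorem mul_centeringMatrix {W : Matrix (Fin n) (Fin n) ℝ} (h : W *ᵥ (fun _ => 1) = 0) :
    W * centeringMatrix n = W := by
  have hJ : W * Matrix.of (fun _ _ => (1 : ℝ)) = 0 := by
    ext i j
    simpa [Matrix.mul_apply, Matrix.mulVec, dotProduct] using congrFun h i
  rw [centeringMatrix, Matrix.mul_sub, Matrix.mul_one, Matrix.mul_smul, hJ, smul_zero, sub_zero]

theorem centeringMatrix_mul {W : Matrix (Fin n) (Fin n) ℝ} (h : Wᵀ *ᵥ (fun _ => 1) = 0) :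
    centeringMatrix n * W = W := by
  simpa [Matrix.transpose_mul, centeringMatrix_transpose] using
    congrArg Matrix.transpose (mul_centeringMatrix h)

theorem centeringMatrix_mul_self (hn : n ≠ 0) :
    centeringMatrix n * centeringMatrix n = centeringMatrix n :=
  mul_centeringMatrix (centeringMatrix_mulVec_one hn)

theorem projMat_eq_kron : projMat n d = kron n d (centeringMatrix n) := rfl

theorem kron_mul (A B : Matrix (Fin n) (Fin n) ℝ) :
    kron n d (A * B) = kron n d A * kron n d B := by
  rw [kron, kron, kron, ← Matrix.mul_kronecker_mul, Matrix.one_mul]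

theorem mulVecE_eq_toLpLin (M : Matrix (Fin n × Fin d) (Fin n × Fin d) ℝ) :
    mulVecE M = Matrix.toLpLin 2 2 M := rfl

theorem projMat_mul_self (hn : n ≠ 0) : projMat n d * projMat n d = projMat n d := by
  rw [projMat_eq_kron, ← kron_mul, centeringMatrix_mul_self hn]

theorem projMat_mul_kron {W : Matrix (Fin n) (Fin n) ℝ} (h : Wᵀ *ᵥ (fun _ => 1) = 0) :
    projMat n d * kron n d W = kron n d W := by
  rw [projMat_eq_kron, ← kron_mul, centeringMatrix_mul h]

theorem kron_mul_projMat {W : Matrix (Fin n) (Fin n) ℝ} (h : W *ᵥ (fun _ => 1) = 0) :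
    kron n d W * projMat n d = kron n d W := by
  rw [projMat_eq_kron, ← kron_mul, mul_centeringMatrix h]

end Matrices

theorem stmt13_general (n d : ℕ) (hn : 1 ≤ n) (χ : ℝ) (hχ : 1 ≤ χ)
    (W : Matrix (Fin n) (Fin n) ℝ)
    (h1 : W.mulVec (fun _ => 1) = 0)
    (h2 : Wᵀ.mulVec (fun _ => 1) = 0)
    (hW : ∀ v : EuclideanSpace ℝ (Fin n × Fin d), mulVecE (projMat n d) v = v →
      ‖mulVecE (kron n d W) v - v‖ ^ 2 ≤ (1 - 1 / χ) * ‖v‖ ^ 2)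
    (η η' : ℝ) (hη' : 0 < η')
    (m g m' : EuclideanSpace ℝ (Fin n × Fin d))
    (hm' : m' = (η / η') • (m + g - mulVecE (kron n d W) (m + g))) :
    pnorm (η • m) ^ 2 ≤
      2 * χ * pnorm (η • m) ^ 2 - 2 * χ * pnorm (η' • m') ^ 2 + 4 * χ ^ 2 * pnorm (η • g) ^ 2 := by
  have hPP := Matrix.toLpLin_mul 2 2 2 (projMat n d) (projMat n d)
  have hPK := Matrix.toLpLin_mul 2 2 2 (projMat n d) (kron n d W)
  have hKP := Matrix.toLpLin_mul 2 2 2 (kron n d W) (projMat n d)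
  rw [projMat_mul_self (by omega)] at hPP
  rw [projMat_mul_kron h2] at hPK
  rw [kron_mul_projMat h1] at hKP
  simp only [pnorm, mulVecE_eq_toLpLin] at hW hm' ⊢
  generalize Matrix.toLpLin 2 2 (projMat n d) = P at *
  generalize Matrix.toLpLin 2 2 (kron n d W) = K at *
  set y := P (η • m) + P (η • g) with hy
  replace hy : y = P (η • (m + g)) := by rw [hy, smul_add, map_add]
  have hPy : P y = y := by rw [hy, ← LinearMap.comp_apply, ← hPP]
  have hPm' : P (η' • m') = y - K y := by
    rw [hm', smul_smul, mul_div_cancel₀ η hη'.ne', smul_sub, ← map_smul, map_sub,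
      ← LinearMap.comp_apply, ← hPK, hy, ← LinearMap.comp_apply K, ← hKP]
  have key := sq_norm_le_of_sq_norm_le_one_sub_inv_mul hχ (hW y hPy)
  rwa [norm_sub_rev, ← hPm'] at key

theorem stmt13 (n d : ℕ) (hn : 1 ≤ n) (hd : 1 ≤ d) (χ : ℝ) (hχ : 1 ≤ χ)
    (W : Matrix (Fin n) (Fin n) ℝ)
    (h1 : W.mulVec (fun _ => 1) = 0)
    (h2 : Wᵀ.mulVec (fun _ => 1) = 0)
    (hW : ∀ v : EuclideanSpace ℝ (Fin n × Fin d), mulVecE (projMat n d) v = v →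
      ‖mulVecE (kron n d W) v - v‖ ^ 2 ≤ (1 - 1 / χ) * ‖v‖ ^ 2)
    (η η' : ℝ) (hη : 0 < η) (hη' : 0 < η')
    (m g m' : EuclideanSpace ℝ (Fin n × Fin d))
    (hm' : m' = (η / η') • (m + g - mulVecE (kron n d W) (m + g))) :
    pnorm (η • m) ^ 2 ≤
      2 * χ * pnorm (η • m) ^ 2 - 2 * χ * pnorm (η' • m') ^ 2 + 4 * χ ^ 2 * pnorm (η • g) ^ 2 :=
  stmt13_general n d hn χ hχ W h1 h2 hW η η' hη' m g m' hm'

end
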